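/- Duality scaling identity for tetrahedroids: T*_{a,b,c}(abc·X₀, c·X₁, b·X₂, a·X₃) = (abc)²·T_{a,b,c}(X₀,X₁,X₂,X₃). -/

import Mathlib

/-- Half the tetrahedroid determinant `T_{a,b,c}`. -/
noncomputable def T (a b c X0 X1 X2 X3 : ℝ) : ℝ :=
  Matrix.det !![(0 : ℝ), 1, 1, 1, X0^2;
                1, 0, a^2, b^2, X1^2;
                1, a^2, 0, c^2, X2^2;
                1, b^2, c^2, 0, X3^2;
                X0^2, X1^2, X2^2, X3^2, 0] / 2

/-- Half the dual tetrahedroid determinant `T*_{a,b,c}`. -/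
noncomputable def Tstar (a b c X0 X1 X2 X3 : ℝ) : ℝ :=
  Matrix.det !![(0 : ℝ), c^2, b^2, a^2, X0^2;
                c^2, 0, 1, 1, X1^2;
                b^2, 1, 0, 1, X2^2;
                a^2, 1, 1, 0, X3^2;
                X0^2, X1^2, X2^2, X3^2, 0] / 2

/-!
When `abc` is invertible, the dual matrix `M*` at `(abc·X₀, c·X₁, b·X₂, a·X₃)` is the congruence
`D M D` of the matrix `M` at `(X₀, X₁, X₂, X₃)` by `D = diag(abc, c/(ab), b/(ac), a/(bc), abc)`,
and `det D = abc`. Clearing denominators turns this into the polynomial identity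
`(abc)⁴ det M* = (abc)⁶ det M`, from which `(abc)⁴` cancels at the generic point.
-/

open Matrix MvPolynomial

section

variable {R S : Type*} [CommRing R] [CommRing S]

def tetrahedroidMatrix (a b c X0 X1 X2 X3 : R) : Matrix (Fin 5) (Fin 5) R :=
  !![0, 1, 1, 1, X0^2;
     1, 0, a^2, b^2, X1^2;
     1, a^2, 0, c^2, X2^2;
     1, b^2, c^2, 0, X3^2;
     X0^2, X1^2, X2^2, X3^2, 0]

def dualTetrahedroidMatrix (a b c X0 X1 X2 X3 : R) : Matrix (Fin 5) (Fin 5) R :=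
  !![0, c^2, b^2, a^2, X0^2;
     c^2, 0, 1, 1, X1^2;
     b^2, 1, 0, 1, X2^2;
     a^2, 1, 1, 0, X3^2;
     X0^2, X1^2, X2^2, X3^2, 0]

theorem tetrahedroidMatrix_map (f : R →+* S) (a b c X0 X1 X2 X3 : R) :
    (tetrahedroidMatrix a b c X0 X1 X2 X3).map f =
      tetrahedroidMatrix (f a) (f b) (f c) (f X0) (f X1) (f X2) (f X3) := by
  ext i j
  fin_cases i <;> fin_cases j <;> simp [tetrahedroidMatrix]

theorem dualTetrahedroidMatrix_map (f : R →+* S) (a b c X0 X1 X2 X3 : R) :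
    (dualTetrahedroidMatrix a b c X0 X1 X2 X3).map f =
      dualTetrahedroidMatrix (f a) (f b) (f c) (f X0) (f X1) (f X2) (f X3) := by
  ext i j
  fin_cases i <;> fin_cases j <;> simp [dualTetrahedroidMatrix]

/-- The congruence `D M D = M*` with denominators cleared by `diag(1, ab, ac, bc, 1)`. -/
theorem diagonal_mul_dualTetrahedroidMatrix_mul_diagonal (a b c X0 X1 X2 X3 : R) :
    diagonal ![1, a*b, a*c, b*c, 1] *
        dualTetrahedroidMatrix a b c (a*b*c*X0) (c*X1) (b*X2) (a*X3) *
        diagonal ![1, a*b, a*c, b*c, 1] =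
      diagonal ![a*b*c, c, b, a, a*b*c] * tetrahedroidMatrix a b c X0 X1 X2 X3 *
        diagonal ![a*b*c, c, b, a, a*b*c] := by
  ext i j
  fin_cases i <;> fin_cases j <;>
    simp [dualTetrahedroidMatrix, tetrahedroidMatrix, diagonal_mul, mul_diagonal] <;> ring

theorem pow_four_mul_det_dualTetrahedroidMatrix (a b c X0 X1 X2 X3 : R) :
    (a*b*c)^4 * (dualTetrahedroidMatrix a b c (a*b*c*X0) (c*X1) (b*X2) (a*X3)).det =
      (a*b*c)^6 * (tetrahedroidMatrix a b c X0 X1 X2 X3).det := by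
  have h := congrArg det (diagonal_mul_dualTetrahedroidMatrix_mul_diagonal a b c X0 X1 X2 X3)
  simp only [det_mul, det_diagonal, Fin.prod_univ_five, cons_val_zero, cons_val_one, cons_val] at h
  linear_combination h

theorem det_dualTetrahedroidMatrix_of_ne_zero [IsDomain R] {a b c : R} (habc : a*b*c ≠ 0)
    (X0 X1 X2 X3 : R) :
    (dualTetrahedroidMatrix a b c (a*b*c*X0) (c*X1) (b*X2) (a*X3)).det =
      (a*b*c)^2 * (tetrahedroidMatrix a b c X0 X1 X2 X3).det :=
  mul_left_cancel₀ (pow_ne_zero 4 habc) <| by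
    rw [pow_four_mul_det_dualTetrahedroidMatrix]; ring

/-- Both sides are polynomials, so it suffices to check the identity at the generic point of
`ℤ[a, b, c, X₀, X₁, X₂, X₃]`, where `abc` is not a zero divisor. -/
theorem det_dualTetrahedroidMatrix (a b c X0 X1 X2 X3 : R) :
    (dualTetrahedroidMatrix a b c (a*b*c*X0) (c*X1) (b*X2) (a*X3)).det =
      (a*b*c)^2 * (tetrahedroidMatrix a b c X0 X1 X2 X3).det := by
  let v : Fin 7 → R := ![a, b, c, X0, X1, X2, X3]
  have hgeneric := det_dualTetrahedroidMatrix_of_ne_zero (R := MvPolynomial (Fin 7) ℤ)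
    (a := X 0) (b := X 1) (c := X 2) (by simp [X_ne_zero]) (X 3) (X 4) (X 5) (X 6)
  have hspecialized := congrArg (aeval (R := ℤ) v).toRingHom hgeneric
  rw [RingHom.map_det, RingHom.map_mul, RingHom.map_det, RingHom.mapMatrix_apply,
    RingHom.mapMatrix_apply, dualTetrahedroidMatrix_map, tetrahedroidMatrix_map] at hspecialized
  simpa [v] using hspecialized

end

/-- Duality scaling identity:
`T*_{a,b,c}(abc·X₀, c·X₁, b·X₂, a·X₃) = (abc)²·T_{a,b,c}(X₀,X₁,X₂,X₃)`. -/
theorem tetrahedroid_duality (a b c X0 X1 X2 X3 : ℝ) :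
    Tstar a b c (a*b*c*X0) (c*X1) (b*X2) (a*X3) =
      (a*b*c)^2 * T a b c X0 X1 X2 X3 := by
  rw [T, Tstar, mul_div_assoc']
  exact congrArg (· / 2) (det_dualTetrahedroidMatrix a b c X0 X1 X2 X3)
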